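/- Let H be a finite simple graph and let v, w be two distinct false twins of H (N(v) = N(w)). Then every biclique of H containing w also contains v, the map B ↦ B ∖ {w} is a bijection from the bicliques of H onto the bicliques of H − {w}, and KB(H − {w}) is isomorphic to KB(H). -/

import Mathlib

/-!
A false twin `w` of `v` can join the side of any complete bipartite set that contains `v`, so by
maximality every biclique meets `{v, w}` in both vertices or in neither. Deleting `w` therefore
loses no information: `B ↦ B \ {w}` is injective on bicliques, sends bicliques to bicliques of
`H - w` (a larger complete bipartite set there would, with `w` added back, enlarge `B`), and
every biclique of `H - w` arises this way (extend it to a biclique of `H`). Two bicliques that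
meet in `w` also meet in `v`, so the bijection preserves intersections, which gives
`KB(H - w) ≅ KB(H)`.
-/

open SimpleGraph

variable {V : Type}

/-- `B1`, `B2` are the two (nonempty) parts of an induced complete bipartite subgraph:
they are disjoint, each part is independent, and all edges between the parts are present. -/
def IsCBP (H : SimpleGraph V) (B1 B2 : Set V) : Prop :=
  B1.Nonempty ∧ B2.Nonempty ∧ Disjoint B1 B2 ∧
    (∀ a ∈ B1, ∀ b ∈ B1, ¬H.Adj a b) ∧
    (∀ a ∈ B2, ∀ b ∈ B2, ¬H.Adj a b) ∧
    (∀ a ∈ B1, ∀ b ∈ B2, H.Adj a b)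

/-- A set of vertices inducing a complete bipartite subgraph `K_{m,n}`, `m, n ≥ 1`. -/
def IsCompleteBipartiteSet (H : SimpleGraph V) (S : Set V) : Prop :=
  ∃ B1 B2 : Set V, IsCBP H B1 B2 ∧ B1 ∪ B2 = S

/-- A biclique: a maximal set of vertices inducing a complete bipartite subgraph. -/
def IsBiclique (H : SimpleGraph V) (S : Set V) : Prop :=
  IsCompleteBipartiteSet H S ∧
    ∀ T : Set V, IsCompleteBipartiteSet H T → S ⊆ T → S = T

/-- The biclique graph `KB(H)`: the intersection graph of the bicliques of `H`. -/
def KB (H : SimpleGraph V) : SimpleGraph {S : Set V // IsBiclique H S} :=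
  SimpleGraph.fromRel fun A B => (A.1 ∩ B.1).Nonempty

variable {H : SimpleGraph V}

section CompleteBipartite

lemma IsCBP.symm {B1 B2 : Set V} (h : IsCBP H B1 B2) : IsCBP H B2 B1 := by
  obtain ⟨h1, h2, hd, hi1, hi2, he⟩ := h
  exact ⟨h2, h1, hd.symm, hi2, hi1, fun a ha b hb => (he b hb a ha).symm⟩

lemma IsCBP.mono_left {B1 B1' B2 : Set V} (h : IsCBP H B1 B2) (hsub : B1' ⊆ B1)
    (hne : B1'.Nonempty) : IsCBP H B1' B2 := by
  obtain ⟨-, h2, hd, hi1, hi2, he⟩ := h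
  exact ⟨hne, h2, hd.mono_left hsub, fun a ha b hb => hi1 a (hsub ha) b (hsub hb), hi2,
    fun a ha => he a (hsub ha)⟩

lemma IsCompleteBipartiteSet.exists_mem_left {S : Set V} (hS : IsCompleteBipartiteSet H S)
    {x : V} (hx : x ∈ S) : ∃ B1 B2, IsCBP H B1 B2 ∧ B1 ∪ B2 = S ∧ x ∈ B1 := by
  obtain ⟨B1, B2, h, rfl⟩ := hS
  rcases hx with hx | hx
  · exact ⟨B1, B2, h, rfl, hx⟩
  · exact ⟨B2, B1, h.symm, Set.union_comm _ _, hx⟩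

lemma IsCompleteBipartiteSet.exists_isBiclique_superset [Finite V] {S : Set V}
    (hS : IsCompleteBipartiteSet H S) : ∃ B, IsBiclique H B ∧ S ⊆ B := by
  obtain ⟨B, hB, hmax⟩ := Set.Finite.exists_maximalFor id
    {T : Set V | IsCompleteBipartiteSet H T ∧ S ⊆ T} (Set.toFinite _) ⟨S, hS, le_rfl⟩
  exact ⟨B, ⟨hB.1, fun T hT hBT => le_antisymm hBT (hmax ⟨hT, hB.2.trans hBT⟩ hBT)⟩, hB.2⟩

lemma isCBP_induce_iff {s : Set V} {T1 T2 : Set s} :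
    IsCBP (H.induce s) T1 T2 ↔ IsCBP H (Subtype.val '' T1) (Subtype.val '' T2) := by
  simp [IsCBP, Set.disjoint_image_iff Subtype.val_injective]

lemma isCompleteBipartiteSet_induce_iff {s : Set V} {T : Set s} :
    IsCompleteBipartiteSet (H.induce s) T ↔ IsCompleteBipartiteSet H (Subtype.val '' T) := by
  constructor
  · rintro ⟨T1, T2, hT, rfl⟩
    exact ⟨_, _, isCBP_induce_iff.mp hT, (Set.image_union _ _ _).symm⟩
  · rintro ⟨B1, B2, hB, hU⟩
    have hpart : ∀ B ⊆ Subtype.val '' T, Subtype.val '' (Subtype.val ⁻¹' B : Set s) = B :=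
      fun B hB => Set.image_preimage_eq_of_subset (hB.trans (Set.image_subset_range _ _))
    refine ⟨Subtype.val ⁻¹' B1, Subtype.val ⁻¹' B2, isCBP_induce_iff.mpr ?_, ?_⟩
    · rwa [hpart B1 (hU ▸ Set.subset_union_left), hpart B2 (hU ▸ Set.subset_union_right)]
    · rw [← Set.preimage_union, hU, Set.preimage_image_eq _ Subtype.val_injective]

end CompleteBipartite

section FalseTwins

variable {x y : V}

lemma IsCBP.insert_of_neighborSet_eq (htwin : H.neighborSet x = H.neighborSet y)
    {B1 B2 : Set V} (h : IsCBP H B1 B2) (hx : x ∈ B1) (hy : y ∉ B1) :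
    IsCBP H (insert y B1) B2 := by
  have hadj : ∀ a, H.Adj x a ↔ H.Adj y a := fun a => Set.ext_iff.mp htwin a
  obtain ⟨-, h2, hd, hi1, hi2, he⟩ := h
  have hy2 : y ∉ B2 := fun hy2 => H.irrefl ((hadj y).mp (he x hx y hy2))
  refine ⟨Set.insert_nonempty _ _, h2, Set.disjoint_insert_left.mpr ⟨hy2, hd⟩, ?_, hi2, ?_⟩
  · rintro a (rfl | ha) b (rfl | hb)
    · exact H.irrefl
    · exact fun hab => hi1 x hx b hb ((hadj b).mpr hab)
    · exact fun hab => hi1 x hx a ha ((hadj a).mpr hab.symm)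
    · exact hi1 a ha b hb
  · rintro a (rfl | ha) b hb
    exacts [(hadj b).mp (he x hx b hb), he a ha b hb]

lemma IsCompleteBipartiteSet.insert_of_neighborSet_eq (htwin : H.neighborSet x = H.neighborSet y)
    {S : Set V} (hS : IsCompleteBipartiteSet H S) (hx : x ∈ S) (hy : y ∉ S) :
    IsCompleteBipartiteSet H (insert y S) := by
  obtain ⟨B1, B2, h, rfl, hx1⟩ := hS.exists_mem_left hx
  exact ⟨_, B2, h.insert_of_neighborSet_eq htwin hx1 fun hy1 => hy (Or.inl hy1),
    Set.insert_union⟩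

lemma IsCompleteBipartiteSet.diff_singleton_of_neighborSet_eq
    (htwin : H.neighborSet x = H.neighborSet y) (hxy : x ≠ y) {S : Set V}
    (hS : IsCompleteBipartiteSet H S) (hx : x ∈ S) : IsCompleteBipartiteSet H (S \ {y}) := by
  obtain ⟨B1, B2, h, rfl, hx1⟩ := hS.exists_mem_left hx
  -- `y` cannot lie opposite its twin `x`, since `x` is not adjacent to `y`
  have hcross : ∀ a ∈ B1, ∀ b ∈ B2, H.Adj a b := h.2.2.2.2.2
  have hy2 : y ∉ B2 := fun hy2 => H.irrefl ((Set.ext_iff.mp htwin y).mp (hcross x hx1 y hy2))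
  refine ⟨B1 \ {y}, B2, h.mono_left Set.sdiff_subset ⟨x, hx1, hxy⟩, ?_⟩
  rw [Set.union_sdiff_distrib, Set.sdiff_singleton_eq_self hy2]

lemma IsBiclique.mem_of_neighborSet_eq (htwin : H.neighborSet x = H.neighborSet y)
    {B : Set V} (hB : IsBiclique H B) (hx : x ∈ B) : y ∈ B := by
  by_contra hy
  have hBy := hB.2 _ (hB.1.insert_of_neighborSet_eq htwin hx hy) (Set.subset_insert _ _)
  exact hy (hBy ▸ Set.mem_insert y B)

lemma IsBiclique.mem_iff_of_neighborSet_eq (htwin : H.neighborSet x = H.neighborSet y)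
    {B : Set V} (hB : IsBiclique H B) : x ∈ B ↔ y ∈ B :=
  ⟨hB.mem_of_neighborSet_eq htwin, hB.mem_of_neighborSet_eq htwin.symm⟩

end FalseTwins

section DeleteTwin

variable {v w : V}

lemma image_val_preimage_diff_singleton (B : Set V) :
    Subtype.val '' (Subtype.val ⁻¹' (B \ {w}) : Set ({w}ᶜ : Set V)) = B \ {w} :=
  Set.image_preimage_eq_of_subset (Subtype.range_coe ▸ Set.sdiff_subset_compl B {w})

lemma IsBiclique.subset_of_diff_singleton_subset (htwin : H.neighborSet v = H.neighborSet w)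
    (hvw : v ≠ w) {B S : Set V} (hB : IsBiclique H B) (hS : IsCompleteBipartiteSet H S)
    (hwS : w ∉ S) (hBS : B \ {w} ⊆ S) : S ⊆ B := by
  by_cases hwB : w ∈ B
  · have hvS : v ∈ S := hBS ⟨hB.mem_of_neighborSet_eq htwin.symm hwB, hvw⟩
    have hBw : B ⊆ insert w S := fun x hx =>
      (eq_or_ne x w).imp id fun hxw => hBS ⟨hx, hxw⟩
    rw [hB.2 _ (hS.insert_of_neighborSet_eq htwin hvS hwS) hBw]
    exact Set.subset_insert w S
  · rw [Set.sdiff_singleton_eq_self hwB] at hBS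
    exact (hB.2 S hS hBS).ge

lemma IsBiclique.induce_compl_singleton (htwin : H.neighborSet v = H.neighborSet w)
    (hvw : v ≠ w) {B : Set V} (hB : IsBiclique H B) :
    IsBiclique (H.induce {w}ᶜ) (Subtype.val ⁻¹' (B \ {w})) := by
  refine ⟨?_, fun T hT hBT => le_antisymm hBT ?_⟩
  · rw [isCompleteBipartiteSet_induce_iff, image_val_preimage_diff_singleton]
    by_cases hwB : w ∈ B
    · exact hB.1.diff_singleton_of_neighborSet_eq htwin hvw
        (hB.mem_of_neighborSet_eq htwin.symm hwB)
    · rw [Set.sdiff_singleton_eq_self hwB]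
      exact hB.1
  · have hS := isCompleteBipartiteSet_induce_iff.mp hT
    have hwS : w ∉ Subtype.val '' T := fun ⟨a, _, ha⟩ => a.2 ha
    have hBS : B \ {w} ⊆ Subtype.val '' T := by
      rw [← image_val_preimage_diff_singleton B]
      exact Set.image_mono hBT
    have hSB := hB.subset_of_diff_singleton_subset htwin hvw hS hwS hBS
    exact fun a ha => ⟨hSB ⟨a, ha, rfl⟩, a.2⟩

lemma IsBiclique.eq_of_diff_singleton_eq (htwin : H.neighborSet v = H.neighborSet w)
    (hvw : v ≠ w) {B B' : Set V} (hB : IsBiclique H B) (hB' : IsBiclique H B')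
    (h : B \ {w} = B' \ {w}) : B = B' := by
  have hv : v ∈ B ↔ v ∈ B' := by
    simpa [hvw] using Set.ext_iff.mp h v
  ext x
  rcases eq_or_ne x w with rfl | hxw
  · rw [← hB.mem_iff_of_neighborSet_eq htwin, ← hB'.mem_iff_of_neighborSet_eq htwin, hv]
  · simpa [hxw] using Set.ext_iff.mp h x

lemma bijOn_preimage_diff_singleton [Finite V] (htwin : H.neighborSet v = H.neighborSet w)
    (hvw : v ≠ w) :
    Set.BijOn (fun B : Set V => (Subtype.val ⁻¹' (B \ {w}) : Set ({w}ᶜ : Set V)))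
      {B : Set V | IsBiclique H B} {T | IsBiclique (H.induce {w}ᶜ) T} := by
  refine ⟨fun B hB => hB.induce_compl_singleton htwin hvw, fun B hB B' hB' h => ?_,
    fun T hT => ?_⟩
  · refine hB.eq_of_diff_singleton_eq htwin hvw hB' ?_
    rw [← image_val_preimage_diff_singleton B, ← image_val_preimage_diff_singleton B']
    exact congrArg _ h
  · obtain ⟨B, hB, hTB⟩ :=
      (isCompleteBipartiteSet_induce_iff.mp hT.1).exists_isBiclique_superset
    refine ⟨B, hB, (hT.2 _ (hB.induce_compl_singleton htwin hvw).1 ?_).symm⟩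
    exact fun a ha => ⟨hTB ⟨a, ha, rfl⟩, a.2⟩

lemma IsBiclique.inter_preimage_diff_singleton_nonempty_iff
    (htwin : H.neighborSet v = H.neighborSet w) (hvw : v ≠ w) {A B : Set V}
    (hA : IsBiclique H A) (hB : IsBiclique H B) :
    ((Subtype.val ⁻¹' (A \ {w}) ∩ Subtype.val ⁻¹' (B \ {w}) : Set ({w}ᶜ : Set V))).Nonempty ↔
      (A ∩ B).Nonempty := by
  refine ⟨fun ⟨a, ha, hb⟩ => ⟨a, ha.1, hb.1⟩, fun ⟨x, hxA, hxB⟩ => ?_⟩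
  rcases eq_or_ne x w with rfl | hxw
  · exact ⟨⟨v, hvw⟩, ⟨hA.mem_of_neighborSet_eq htwin.symm hxA, hvw⟩,
      ⟨hB.mem_of_neighborSet_eq htwin.symm hxB, hvw⟩⟩
  · exact ⟨⟨x, hxw⟩, ⟨hxA, hxw⟩, ⟨hxB, hxw⟩⟩

end DeleteTwin

def KB.isoOfEquiv {W : Type} {H' : SimpleGraph W}
    (e : {S : Set V // IsBiclique H S} ≃ {T : Set W // IsBiclique H' T})
    (he : ∀ A B, ((e A).1 ∩ (e B).1).Nonempty ↔ (A.1 ∩ B.1).Nonempty) : KB H ≃g KB H' where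
  toEquiv := e
  map_rel_iff' {A B} := by
    simp only [KB, fromRel_adj, e.injective.ne_iff, he]

/-- If `v, w` are false twins, every biclique containing `w` contains `v`, the map
`B ↦ B \ {w}` is a bijection from the bicliques of `H` onto the bicliques of `H - {w}`,
and `KB(H - {w}) ≅ KB(H)`. -/
theorem stmt_13 {V : Type} [Fintype V] (H : SimpleGraph V) (v w : V) (hvw : v ≠ w)
    (htwin : H.neighborSet v = H.neighborSet w) :
    (∀ B : Set V, IsBiclique H B → w ∈ B → v ∈ B) ∧
    Set.BijOn (fun B : Set V => (Subtype.val ⁻¹' (B \ {w}) : Set ({w}ᶜ : Set V)))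
      {B : Set V | IsBiclique H B}
      {T : Set ({w}ᶜ : Set V) | IsBiclique (SimpleGraph.induce ({w}ᶜ : Set V) H) T} ∧
    Nonempty (KB (SimpleGraph.induce ({w}ᶜ : Set V) H) ≃g KB H) := by
  have hbij := bijOn_preimage_diff_singleton htwin hvw
  refine ⟨fun B hB => hB.mem_of_neighborSet_eq htwin.symm, hbij, ⟨(KB.isoOfEquiv
    (hbij.equiv _) fun A B => ?_).symm⟩⟩
  exact A.2.inter_preimage_diff_singleton_nonempty_iff htwin hvw B.2
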